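/- Conversely, let φ be a state on R⟨x₁,…,x_d⟩, and let {P_u} be defined by the Gram–Schmidt recursion P_u = x_u − Σ_{|v|<|u|, ‖P_v‖≠0}(⟨x_u,P_v⟩/‖P_v‖²)P_v, so that each P_u is orthogonal to all polynomials of lower degree. If for all distinct multi-indices u ≠ w with |u| = |w| = n one has ⟨x_u,x_w⟩ = Σ_{|v|<n, ‖P_v‖≠0} ⟨x_u,P_v⟩⟨P_v,x_w⟩/⟨P_v,P_v⟩, then {P_u} is a monic orthogonal polynomial system for φ. -/

import Mathlib

noncomputable section
open scoped Classical

abbrev NCPoly (d : ℕ) := FreeAlgebra ℝ (Fin d)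

/-- The monomial x_u = x_{u(1)} ⋯ x_{u(k)}. -/
def Xmon {d : ℕ} (u : List (Fin d)) : NCPoly d := (u.map (FreeAlgebra.ι ℝ)).prod

/-- A state on ℝ⟨x₁,…,x_d⟩. -/
structure IsState {d : ℕ} (φ : NCPoly d →ₗ[ℝ] ℝ) : Prop where
  unital : φ 1 = 1
  star_comp : ∀ p : NCPoly d, φ (star p) = φ p
  pos : ∀ p : NCPoly d, 0 ≤ φ (star p * p)

def ipS {d : ℕ} (φ : NCPoly d →ₗ[ℝ] ℝ) (p q : NCPoly d) : ℝ := φ (star p * q)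

def nrmS {d : ℕ} (φ : NCPoly d →ₗ[ℝ] ℝ) (p : NCPoly d) : ℝ := Real.sqrt (ipS φ p p)

def IsMonicFamily {d : ℕ} (P : List (Fin d) → NCPoly d) : Prop :=
  ∀ u, P u - Xmon u ∈
    Submodule.span ℝ {q : NCPoly d | ∃ v : List (Fin d), v.length < u.length ∧ q = Xmon v}

def IsMOPS {d : ℕ} (φ : NCPoly d →ₗ[ℝ] ℝ) (P : List (Fin d) → NCPoly d) : Prop :=
  IsMonicFamily P ∧ ∀ u v, u ≠ v → ipS φ (P u) (P v) = 0

def wordsLen (d : ℕ) : ℕ → Finset (List (Fin d))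
  | 0 => {[]}
  | k + 1 => ((Finset.univ : Finset (Fin d)) ×ˢ wordsLen d k).image fun p => p.1 :: p.2

def lowWords (d n : ℕ) : Finset (List (Fin d)) := (Finset.range n).biUnion (wordsLen d)

/-- Gram-Schmidt recursion. -/
def IsGS {d : ℕ} (φ : NCPoly d →ₗ[ℝ] ℝ) (P : List (Fin d) → NCPoly d) : Prop :=
  ∀ u, P u = Xmon u - ∑ v ∈ (lowWords d u.length).filter (fun v => nrmS φ (P v) ≠ 0),
      (ipS φ (Xmon u) (P v) / (nrmS φ (P v)) ^ 2) • P v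


section Aux

variable {d : ℕ} (φ : NCPoly d →ₗ[ℝ] ℝ)

lemma myStarSmul (c : ℝ) (p : NCPoly d) : star (c • p) = c • star p := by
  rw [Algebra.smul_def, star_mul, Algebra.smul_def]
  rw [show star ((algebraMap ℝ (NCPoly d)) c) = algebraMap ℝ (NCPoly d) c by simp]
  exact (Algebra.commutes c (star p)).symm

lemma ipS_sub_left (p q r : NCPoly d) : ipS φ (p - q) r = ipS φ p r - ipS φ q r := by
  simp [ipS, star_sub, sub_mul, map_sub]

lemma ipS_sub_right (p q r : NCPoly d) : ipS φ p (q - r) = ipS φ p q - ipS φ p r := by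
  simp [ipS, mul_sub, map_sub]

lemma ipS_smul_left (c : ℝ) (p r : NCPoly d) : ipS φ (c • p) r = c * ipS φ p r := by
  simp [ipS, myStarSmul c p, smul_mul_assoc, map_smul, smul_eq_mul]

lemma ipS_smul_right (c : ℝ) (p r : NCPoly d) : ipS φ p (c • r) = c * ipS φ p r := by
  simp [ipS, mul_smul_comm, map_smul, smul_eq_mul]

lemma ipS_sum_left {α : Type*} (s : Finset α) (f : α → NCPoly d) (r : NCPoly d) :
    ipS φ (∑ v ∈ s, f v) r = ∑ v ∈ s, ipS φ (f v) r := by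
  simp [ipS, star_sum, Finset.sum_mul, map_sum]

lemma ipS_sum_right {α : Type*} (s : Finset α) (f : α → NCPoly d) (r : NCPoly d) :
    ipS φ r (∑ v ∈ s, f v) = ∑ v ∈ s, ipS φ r (f v) := by
  simp [ipS, Finset.mul_sum, map_sum]

lemma ipS_symm (hφ : IsState φ) (p q : NCPoly d) : ipS φ p q = ipS φ q p := by
  have h : star (star p * q) = star q * p := by simp
  rw [ipS, ipS, ← hφ.star_comp (star p * q), h]

lemma ipS_zero_of_self (hφ : IsState φ) {q : NCPoly d} (hq : ipS φ q q = 0)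
    (p : NCPoly d) : ipS φ p q = 0 := by
  by_contra h
  have key : ∀ t : ℝ, 0 ≤ ipS φ p p + 2 * t * ipS φ p q := by
    intro t
    have h0 := hφ.pos (p + t • q)
    have e : ipS φ (p + t • q) (p + t • q) = ipS φ p p + 2 * t * ipS φ p q := by
      have h1 : p + t • q = p - (-t) • q := by simp
      rw [h1, ipS_sub_left, ipS_sub_right, ipS_sub_right, ipS_smul_left, ipS_smul_right,
        ipS_smul_left, ipS_smul_right, hq, ipS_symm φ hφ q p]
      ring
    rw [show φ (star (p + t • q) * (p + t • q)) = ipS φ (p + t • q) (p + t • q) from rfl,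
      e] at h0
    exact h0
  have hkey := key (-(ipS φ p p + 1) / (2 * ipS φ p q))
  have h2 : 2 * (-(ipS φ p p + 1) / (2 * ipS φ p q)) * ipS φ p q = -(ipS φ p p + 1) := by
    field_simp
  rw [h2] at hkey
  linarith

lemma nrmS_sq (hφ : IsState φ) (p : NCPoly d) : nrmS φ p ^ 2 = ipS φ p p :=
  Real.sq_sqrt (hφ.pos p)

lemma nrmS_ne_zero_iff (hφ : IsState φ) (p : NCPoly d) :
    nrmS φ p ≠ 0 ↔ ipS φ p p ≠ 0 :=
  not_iff_not.mpr (Real.sqrt_eq_zero (hφ.pos p))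

lemma mem_wordsLen : ∀ (k : ℕ) (v : List (Fin d)), v ∈ wordsLen d k ↔ v.length = k := by
  intro k
  induction k with
  | zero => intro v; simp [wordsLen, List.length_eq_zero_iff]
  | succ k ih =>
    intro v
    constructor
    · intro hv
      simp only [wordsLen, Finset.mem_image, Finset.mem_product] at hv
      obtain ⟨⟨a, t⟩, ⟨_, ht⟩, rfl⟩ := hv
      simp [(ih t).mp ht]
    · intro hv
      cases v with
      | nil => simp at hv
      | cons a t =>
        simp only [wordsLen, Finset.mem_image, Finset.mem_product]
        exact ⟨⟨a, t⟩, ⟨Finset.mem_univ a, (ih t).mpr (by simpa using hv)⟩, rfl⟩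

lemma mem_lowWords (n : ℕ) (v : List (Fin d)) : v ∈ lowWords d n ↔ v.length < n := by
  simp only [lowWords, Finset.mem_biUnion, Finset.mem_range, mem_wordsLen]
  constructor
  · rintro ⟨k, hk, rfl⟩; exact hk
  · intro h; exact ⟨v.length, h, rfl⟩

lemma P_mem_span (P : List (Fin d) → NCPoly d) (hGS : IsGS φ P) :
    ∀ (n : ℕ) (u : List (Fin d)), u.length ≤ n →
      P u ∈ Submodule.span ℝ
        {q : NCPoly d | ∃ v : List (Fin d), v.length ≤ n ∧ q = Xmon v} := by
  intro n
  induction n using Nat.strong_induction_on with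
  | _ n IH =>
  intro u hu
  rw [hGS u]
  apply Submodule.sub_mem
  · exact Submodule.subset_span ⟨u, hu, rfl⟩
  · apply Submodule.sum_mem
    intro v hv
    have hvlen : v.length < u.length :=
      (mem_lowWords u.length v).mp (Finset.mem_filter.mp hv).1
    apply Submodule.smul_mem
    have hm := IH v.length (by omega) v le_rfl
    refine Submodule.span_mono ?_ hm
    rintro q ⟨w, hw, rfl⟩
    exact ⟨w, by omega, rfl⟩

lemma orth_of_mom (hφ : IsState φ) (P : List (Fin d) → NCPoly d) (hGS : IsGS φ P)
    (hmom : ∀ (n : ℕ) (u w : List (Fin d)), u.length = n → w.length = n → u ≠ w →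
      ipS φ (Xmon u) (Xmon w) =
        ∑ v ∈ (lowWords d n).filter (fun v => nrmS φ (P v) ≠ 0),
          ipS φ (Xmon u) (P v) * ipS φ (P v) (Xmon w) / ipS φ (P v) (P v)) :
    ∀ (n : ℕ) (u w : List (Fin d)), u.length ≤ n → w.length ≤ n → u ≠ w →
      ipS φ (P u) (P w) = 0 := by
  intro n
  induction n using Nat.strong_induction_on with
  | _ n IH =>
  have hlow : ∀ u w : List (Fin d), u.length = n → w.length < n →
      ipS φ (P u) (P w) = 0 := by
    intro u w hu hw
    by_cases hz : ipS φ (P w) (P w) = 0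
    · exact ipS_zero_of_self φ hφ hz (P u)
    · have hGSu := hGS u
      rw [hu] at hGSu
      rw [hGSu, ipS_sub_left, ipS_sum_left]
      have hwF : w ∈ (lowWords d n).filter (fun v => nrmS φ (P v) ≠ 0) :=
        Finset.mem_filter.mpr ⟨(mem_lowWords n w).mpr hw,
          (nrmS_ne_zero_iff φ hφ (P w)).mpr hz⟩
      rw [Finset.sum_eq_single_of_mem w hwF ?_]
      · rw [ipS_smul_left, nrmS_sq φ hφ, div_mul_cancel₀ _ hz, sub_self]
      · intro v hv hne
        have hvlen : v.length < n := (mem_lowWords n v).mp (Finset.mem_filter.mp hv).1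
        rw [ipS_smul_left,
          IH (max v.length w.length) (by omega) v w (le_max_left _ _) (le_max_right _ _) hne,
          mul_zero]
  intro u w hu hw huw
  by_cases hun : u.length = n
  · by_cases hwn : w.length = n
    · have hGSw := hGS w
      rw [hwn] at hGSw
      have hGSu := hGS u
      rw [hun] at hGSu
      calc ipS φ (P u) (P w)
          = ipS φ (P u) (Xmon w) -
            ∑ v ∈ (lowWords d n).filter (fun v => nrmS φ (P v) ≠ 0),
              (ipS φ (Xmon w) (P v) / nrmS φ (P v) ^ 2) * ipS φ (P u) (P v) := by
            conv_lhs => rw [hGSw]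
            rw [ipS_sub_right, ipS_sum_right]
            congr 1
            exact Finset.sum_congr rfl fun v _ => ipS_smul_right φ _ _ _
        _ = ipS φ (P u) (Xmon w) := by
            rw [show (∑ v ∈ (lowWords d n).filter (fun v => nrmS φ (P v) ≠ 0),
              (ipS φ (Xmon w) (P v) / nrmS φ (P v) ^ 2) * ipS φ (P u) (P v)) = 0 from ?_,
              sub_zero]
            apply Finset.sum_eq_zero
            intro v hv
            have hvlen : v.length < n := (mem_lowWords n v).mp (Finset.mem_filter.mp hv).1
            rw [hlow u v hun hvlen, mul_zero]
        _ = ipS φ (Xmon u) (Xmon w) -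
            ∑ v ∈ (lowWords d n).filter (fun v => nrmS φ (P v) ≠ 0),
              (ipS φ (Xmon u) (P v) / nrmS φ (P v) ^ 2) * ipS φ (P v) (Xmon w) := by
            conv_lhs => rw [hGSu]
            rw [ipS_sub_left, ipS_sum_left]
            congr 1
            exact Finset.sum_congr rfl fun v _ => ipS_smul_left φ _ _ _
        _ = 0 := by
            rw [hmom n u w hun hwn huw, ← Finset.sum_sub_distrib]
            apply Finset.sum_eq_zero
            intro v hv
            rw [nrmS_sq φ hφ]
            ring
    · exact hlow u w hun (lt_of_le_of_ne hw hwn)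
  · by_cases hwn : w.length = n
    · rw [ipS_symm φ hφ]
      exact hlow w u hwn (lt_of_le_of_ne hu hun)
    · exact IH (max u.length w.length) (by omega) u w
        (le_max_left _ _) (le_max_right _ _) huw

end Aux

/-- conversely, if the Gram–Schmidt polynomials satisfy the moment
relation, they form a MOPS. -/
theorem moment_relation_gives_mops {d : ℕ} (φ : NCPoly d →ₗ[ℝ] ℝ) (hφ : IsState φ)
    (P : List (Fin d) → NCPoly d) (hGS : IsGS φ P)
    (hmom : ∀ (n : ℕ) (u w : List (Fin d)), u.length = n → w.length = n → u ≠ w →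
      ipS φ (Xmon u) (Xmon w) =
        ∑ v ∈ (lowWords d n).filter (fun v => nrmS φ (P v) ≠ 0),
          ipS φ (Xmon u) (P v) * ipS φ (P v) (Xmon w) / ipS φ (P v) (P v)) :
    IsMOPS φ P := by
  constructor
  · intro u
    rw [hGS u, sub_sub_cancel_left]
    apply Submodule.neg_mem
    apply Submodule.sum_mem
    intro v hv
    have hvlen : v.length < u.length :=
      (mem_lowWords u.length v).mp (Finset.mem_filter.mp hv).1
    apply Submodule.smul_mem
    have hm := P_mem_span φ P hGS v.length v le_rfl
    refine Submodule.span_mono ?_ hm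
    rintro q ⟨w, hw, rfl⟩
    exact ⟨w, by omega, rfl⟩
  · intro u v huv
    exact orth_of_mom φ hφ P hGS hmom (max u.length v.length) u v
      (le_max_left _ _) (le_max_right _ _) huv
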